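/- arXiv:2501.10962 — 4 statements merged into one kernel-verified Lean document; each statement's English description precedes it below -/
import Mathlib

section
/- Let P be a set of primes and let H = {h₁,…,h_d} be a non-empty finite set of non-negative integers. If the limit κ_P^H := lim_{x→∞} (1/x) Σ_{n≤x} λ_P(n+h₁)⋯λ_P(n+h_d) exists and |κ_P^H| = 1, then P is the empty set. -/
/-!
If `|κ| = 1` then `Λ_P^H(n) = κ` outside a set of density zero. Modulo 2, the polynomial
`p = ∑_{h ∈ H} X^h ∈ 𝔽₂[X]` divides some `X^v + X^(v+m)` with `m > 0`, since the powers of `X`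
modulo `p` repeat. If `p q = X^v + X^(v+m)` then, as `λ_P² = 1`, the product of the `Λ_P^H(n + s)`
over the support of `q` equals `λ_P(n+v) λ_P(n+v+m)`, which is therefore `κ^|supp q|` for almost
all `n`. Multiplying this at `n` and at `n + m` gives `λ_P(n) λ_P(n+2m) = 1` for almost all `n`, so
the two-point correlation at shift `2m` has mean `1`, against the Matomäki–Radziwiłł bound.
-/

open Filter Topology
open scoped symmDiff Classical

/-- `Ω_P(n)`: number of prime factors of `n` (with multiplicity) lying in `P`. -/
noncomputable def OmegaP (P : Set ℕ) (n : ℕ) : ℕ :=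
  n.factorization.sum fun p k => if p ∈ P then k else 0

/-- `λ_P`, the completely multiplicative function equal to `-1` at primes in `P`
and `1` at all other primes. -/
noncomputable def lambdaP (P : Set ℕ) (n : ℕ) : ℝ :=
  (-1 : ℝ) ^ OmegaP P n

/-- `Λ_P^H(n) = ∏_{h ∈ H} λ_P(n + h)` (empty product is `1`). -/
noncomputable def LambdaPH (P : Set ℕ) (H : Finset ℕ) (n : ℕ) : ℝ :=
  ∏ h ∈ H, lambdaP P (n + h)

/-- `N_P^H = {n : Λ_P^H(n) = -1}`. -/
def NPH (P : Set ℕ) (H : Finset ℕ) : Set ℕ :=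
  {n : ℕ | LambdaPH P H n = -1}

/-- Number of elements of `A` in `[1, x]`. -/
noncomputable def countIn (A : Set ℕ) (x : ℕ) : ℕ :=
  ((Finset.Icc 1 x).filter (fun n => n ∈ A)).card

/-- `A ⊆ ℕ` has natural density `d`: `|A ∩ [1,x]|/x → d`. -/
def HasDensity (A : Set ℕ) (d : ℝ) : Prop :=
  Filter.Tendsto (fun x : ℕ => (countIn A x : ℝ) / x) Filter.atTop (nhds d)

/-- The Cesàro average `(1/x) ∑_{n ≤ x} Λ_P^H(n)`. -/
noncomputable def cesaroAvg (P : Set ℕ) (H : Finset ℕ) (x : ℕ) : ℝ :=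
  (∑ n ∈ Finset.Icc 1 x, LambdaPH P H n) / x

/-- A set of naturals is small if the sum of reciprocals of its elements converges. -/
def SmallSet (P : Set ℕ) : Prop :=
  Summable fun p : P => (1 : ℝ) / (p : ℝ)

/-- `C(r,s) = {n : n ≡ -r (mod s)}`. -/
def Cset (r s : ℕ) : Set ℕ :=
  {n : ℕ | (n : ℤ) ≡ -(r : ℤ) [ZMOD (s : ℤ)]}

/-- The set of `P`-smooth positive integers. -/
def SmoothP (P : Set ℕ) : Set ℕ :=
  {n : ℕ | 0 < n ∧ ∀ p : ℕ, p.Prime → p ∣ n → p ∈ P}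

/-- `𝒜_P`: all finite unions of sets from `{∅} ∪ {C(r,n) : r ∈ ℕ, n ∈ S_P}`. -/
def calA (P : Set ℕ) : Set (Set ℕ) :=
  {A : Set ℕ | ∃ F : Finset (ℕ × ℕ), (∀ q ∈ F, q.2 ∈ SmoothP P) ∧
    A = ⋃ q ∈ F, Cset q.1 q.2}

open Polynomial

theorem Polynomial.exists_dvd_X_pow_sub_X_pow {K : Type*} [Field K] [Finite K] {p : K[X]}
    (hp : p ≠ 0) : ∃ i j : ℕ, i < j ∧ p ∣ X ^ j - X ^ i := by
  have := (AdjoinRoot.powerBasis hp).finite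
  have : Finite (AdjoinRoot p) := Module.finite_of_finite K
  obtain ⟨i, j, hij, h⟩ := Set.finite_univ.exists_lt_map_eq_of_forall_mem
    (f := fun n : ℕ => AdjoinRoot.root p ^ n) fun _ => Set.mem_univ _
  exact ⟨i, j, hij, AdjoinRoot.mk_eq_mk.mp (by simpa using h.symm)⟩

theorem ZMod.sum_support_X_pow (q : (ZMod 2)[X]) :
    ∑ s ∈ q.support, (X ^ s : (ZMod 2)[X]) = q := by
  have h_one : ∀ a : ZMod 2, a ≠ 0 → a = 1 := by decide
  conv_rhs => rw [q.as_sum_support]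
  refine Finset.sum_congr rfl fun s hs => ?_
  rw [h_one _ (mem_support_iff.mp hs), X_pow_eq_monomial]

theorem exists_sum_sum_X_pow_eq_X_pow_add_X_pow (H : Finset ℕ) (hH : H.Nonempty) :
    ∃ (S : Finset ℕ) (v m : ℕ), 0 < m ∧
      ∑ s ∈ S, ∑ h ∈ H, (X ^ (s + h) : (ZMod 2)[X]) = X ^ v + X ^ (v + m) := by
  set p : (ZMod 2)[X] := ∑ h ∈ H, X ^ h
  have hp : p ≠ 0 := by
    obtain ⟨h₀, hh₀⟩ := hH
    intro h0
    simpa [p, coeff_X_pow, hh₀] using congrArg (coeff · h₀) h0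
  obtain ⟨v, j, hvj, q, hq⟩ := exists_dvd_X_pow_sub_X_pow hp
  refine ⟨q.support, v, j - v, by omega, ?_⟩
  rw [Nat.add_sub_cancel' hvj.le, add_comm (X ^ v), ← CharTwo.sub_eq_add, hq]
  conv_rhs => rw [← ZMod.sum_support_X_pow q]
  rw [Finset.sum_mul_sum, Finset.sum_comm]
  simp only [pow_add, mul_comm]

theorem exists_sum_sum_eq_add (H : Finset ℕ) (hH : H.Nonempty) :
    ∃ (S : Finset ℕ) (v m : ℕ), 0 < m ∧
      ∀ e : ℕ → ZMod 2, ∑ s ∈ S, ∑ h ∈ H, e (s + h) = e v + e (v + m) := by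
  obtain ⟨S, v, m, hm, hS⟩ := exists_sum_sum_X_pow_eq_X_pow_add_X_pow H hH
  refine ⟨S, v, m, hm, fun e => ?_⟩
  -- evaluate both sides of `hS` under the linear functional `X ^ k ↦ e k`
  have := congrArg (lsum fun k => LinearMap.toSpanSingleton (ZMod 2) (ZMod 2) (e k)) hS
  simp only [map_add, map_sum] at this
  simpa [X_pow_eq_monomial, lsum_apply, sum_monomial_index] using this

section Density

noncomputable def cesaroMean (u : ℕ → ℝ) (x : ℕ) : ℝ :=
  (∑ n ∈ Finset.Icc 1 x, u n) / x

theorem countIn_mono {A B : Set ℕ} (h : A ⊆ B) (x : ℕ) : countIn A x ≤ countIn B x :=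
  Finset.card_le_card (Finset.monotone_filter_right _ fun _ _ hn => h hn)

theorem hasDensity_zero_of_le {A : Set ℕ} {f : ℕ → ℝ} (hf : Tendsto f atTop (𝓝 0))
    (hA : ∀ᶠ x in atTop, (countIn A x : ℝ) / x ≤ f x) : HasDensity A 0 :=
  squeeze_zero' (Eventually.of_forall fun _ => by positivity) hA hf

theorem HasDensity.zero_mono {A B : Set ℕ} (hA : HasDensity A 0) (hB : B ⊆ A) :
    HasDensity B 0 :=
  hasDensity_zero_of_le hA <| Eventually.of_forall fun x => by
    gcongr; exact countIn_mono hB x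

theorem hasDensity_zero_biUnion {ι : Type*} (S : Finset ι) {A : ι → Set ℕ}
    (hA : ∀ i ∈ S, HasDensity (A i) 0) : HasDensity (⋃ i ∈ S, A i) 0 := by
  refine hasDensity_zero_of_le (f := fun x => ∑ i ∈ S, (countIn (A i) x : ℝ) / x) ?_ ?_
  · simpa using tendsto_finsetSum S hA
  · refine Eventually.of_forall fun x => ?_
    rw [← Finset.sum_div]
    gcongr
    norm_cast
    refine (Finset.card_le_card fun n hn => ?_).trans Finset.card_biUnion_le
    simp only [Finset.mem_filter, Set.mem_iUnion] at hn
    obtain ⟨hn, i, hi, hni⟩ := hn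
    exact Finset.mem_biUnion.mpr ⟨i, hi, Finset.mem_filter.mpr ⟨hn, hni⟩⟩

theorem countIn_preimage_add_le (A : Set ℕ) (s x : ℕ) :
    countIn {n | n + s ∈ A} x ≤ countIn A (x + s) := by
  refine Finset.card_le_card_of_injOn (· + s) (fun n hn => ?_) (add_left_injective s).injOn
  simp only [Finset.coe_filter, Finset.mem_Icc, Set.mem_ofPred_eq] at hn ⊢
  exact ⟨⟨by omega, by omega⟩, hn.2⟩

theorem countIn_le_preimage_add (A : Set ℕ) (s x : ℕ) :
    countIn A x ≤ countIn {n | n + s ∈ A} x + s := by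
  set B := (Finset.Icc 1 x).filter (· ∈ {n | n + s ∈ A})
  calc countIn A x
      ≤ (Finset.Icc 1 s ∪ B.image (· + s)).card := by
        refine Finset.card_le_card fun n hn => ?_
        simp only [Finset.mem_filter, Finset.mem_Icc] at hn
        simp only [B, Finset.mem_union, Finset.mem_Icc, Finset.mem_image, Finset.mem_filter,
          Set.mem_ofPred_eq]
        by_cases hns : n ≤ s
        · exact Or.inl ⟨hn.1.1, hns⟩
        · have hn' : n - s + s = n := Nat.sub_add_cancel (by omega)
          exact Or.inr ⟨n - s, ⟨⟨by omega, by omega⟩, by rw [hn']; exact hn.2⟩, hn'⟩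
    _ ≤ s + B.card := (Finset.card_union_le _ _).trans (add_le_add (by simp) Finset.card_image_le)
    _ = countIn {n | n + s ∈ A} x + s := add_comm _ _

theorem hasDensity_zero_preimage_add_iff (A : Set ℕ) (s : ℕ) :
    HasDensity {n | n + s ∈ A} 0 ↔ HasDensity A 0 := by
  constructor
  · intro h
    refine hasDensity_zero_of_le (f := fun x => (countIn {n | n + s ∈ A} x : ℝ) / x + s / x)
      (by simpa using h.add (tendsto_const_div_atTop_nhds_zero_nat (s : ℝ)))
      (Eventually.of_forall fun x => ?_)
    rw [← add_div]
    gcongr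
    exact_mod_cast countIn_le_preimage_add A s x
  · intro h
    refine hasDensity_zero_of_le
      (by simpa using (h.comp (tendsto_add_atTop_nat s)).mul_const ((1 : ℝ) + s))
      (eventually_ge_atTop 1 |>.mono fun x hx => ?_)
    have hcount : (countIn {n | n + s ∈ A} x : ℝ) ≤ countIn A (x + s) := by
      exact_mod_cast countIn_preimage_add_le A s x
    have hx : (1 : ℝ) ≤ x := by exact_mod_cast hx
    rw [div_mul_eq_mul_div, div_le_div_iff₀ (by positivity) (by positivity)]
    calc (countIn {n | n + s ∈ A} x : ℝ) * (x + s)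
        ≤ countIn A (x + s) * (x + s) := by gcongr
      _ ≤ countIn A (x + s) * (1 + s) * x := by
        nlinarith [(by positivity : (0 : ℝ) ≤ countIn A (x + s) * s)]

variable {u : ℕ → ℝ} {c : ℝ}

theorem countIn_setOf_ne_eq_sum (hu : ∀ n, u n = 1 ∨ u n = -1) (hc : c = 1 ∨ c = -1) (x : ℕ) :
    (countIn {n | u n ≠ c} x : ℝ) = ∑ n ∈ Finset.Icc 1 x, (1 - c * u n) / 2 := by
  rw [countIn, Finset.card_filter, Nat.cast_sum]
  refine Finset.sum_congr rfl fun n _ => ?_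
  rcases hu n with h | h <;> rcases hc with rfl | rfl <;> norm_num [h]

theorem tendsto_cesaroMean_iff_hasDensity_zero (hu : ∀ n, u n = 1 ∨ u n = -1)
    (hc : c = 1 ∨ c = -1) :
    Tendsto (cesaroMean u) atTop (𝓝 c) ↔ HasDensity {n | u n ≠ c} 0 := by
  have hcc : c * c = 1 := by rcases hc with rfl | rfl <;> norm_num
  have key : ∀ᶠ x : ℕ in atTop,
      (countIn {n | u n ≠ c} x : ℝ) / x = (1 - c * cesaroMean u x) / 2 := by
    filter_upwards [eventually_ge_atTop 1] with x hx
    have : (x : ℝ) ≠ 0 := by positivity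
    rw [countIn_setOf_ne_eq_sum hu hc, cesaroMean, ← Finset.sum_div, Finset.sum_sub_distrib,
      ← Finset.mul_sum, Finset.sum_const, Nat.card_Icc, Nat.add_sub_cancel]
    field_simp
    ring
  constructor
  · intro h
    have := ((h.const_mul c).const_sub 1).div_const 2
    rw [hcc, sub_self, zero_div] at this
    exact this.congr' (key.mono fun _ hx => hx.symm)
  · intro h
    have := (h.const_mul 2).const_sub 1 |>.const_mul c
    rw [mul_zero, sub_zero, mul_one] at this
    refine this.congr' (key.mono fun x hx => ?_)
    rw [hx]
    linear_combination (cesaroMean u x) * hcc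

end Density

section Liouville

theorem lambdaP_mul_self (P : Set ℕ) (n : ℕ) : lambdaP P n * lambdaP P n = 1 := by
  rw [lambdaP, ← pow_add, Even.neg_one_pow ⟨_, rfl⟩]

theorem lambdaP_mul_lambdaP_eq_one_or_neg_one (P : Set ℕ) (a b : ℕ) :
    lambdaP P a * lambdaP P b = 1 ∨ lambdaP P a * lambdaP P b = -1 := by
  rw [lambdaP, lambdaP, ← pow_add]
  exact neg_one_pow_eq_or ℝ _

theorem LambdaPH_eq_one_or_neg_one (P : Set ℕ) (H : Finset ℕ) (n : ℕ) :
    LambdaPH P H n = 1 ∨ LambdaPH P H n = -1 := by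
  simp only [LambdaPH, lambdaP, Finset.prod_pow_eq_pow_sum]
  exact neg_one_pow_eq_or ℝ _

theorem prod_LambdaPH_add_eq {S H : Finset ℕ} {v m : ℕ}
    (hS : ∀ e : ℕ → ZMod 2, ∑ s ∈ S, ∑ h ∈ H, e (s + h) = e v + e (v + m))
    (P : Set ℕ) (n : ℕ) :
    ∏ s ∈ S, LambdaPH P H (n + s) = lambdaP P (n + v) * lambdaP P (n + v + m) := by
  simp only [LambdaPH, lambdaP, Finset.prod_pow_eq_pow_sum, ← pow_add]
  rw [neg_one_pow_eq_pow_mod_two, neg_one_pow_eq_pow_mod_two (_ + _)]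
  congr 1
  rw [← ZMod.natCast_eq_natCast_iff']
  push_cast
  simpa only [add_assoc] using hS fun k => (OmegaP P (n + k) : ZMod 2)

theorem lambdaP_mul_lambdaP_add_two_mul_eq_one {S H : Finset ℕ} {v m : ℕ}
    (hS : ∀ e : ℕ → ZMod 2, ∑ s ∈ S, ∑ h ∈ H, e (s + h) = e v + e (v + m))
    {P : Set ℕ} {κ : ℝ} (hκ : κ = 1 ∨ κ = -1) {n : ℕ}
    (hn : ∀ t ∈ S ∪ S.image (· + m), LambdaPH P H (n + t) = κ) :
    lambdaP P (n + v) * lambdaP P (n + v + 2 * m) = 1 := by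
  have hpair : ∀ k, (∀ s ∈ S, LambdaPH P H (k + s) = κ) →
      lambdaP P (k + v) * lambdaP P (k + v + m) = κ ^ S.card := fun k hk => by
    rw [← prod_LambdaPH_add_eq hS, Finset.prod_congr rfl hk, Finset.prod_const]
  have h₀ := hpair n fun s hs => hn s (Finset.mem_union_left _ hs)
  have h₁ := hpair (n + m) fun s hs => by
    rw [show n + m + s = n + (s + m) by ring]
    exact hn _ (Finset.mem_union_right _ (Finset.mem_image_of_mem _ hs))
  rw [show n + m + v = n + v + m by ring] at h₁
  calc lambdaP P (n + v) * lambdaP P (n + v + 2 * m)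
      = (lambdaP P (n + v) * lambdaP P (n + v + m)) *
          (lambdaP P (n + v + m) * lambdaP P (n + v + m + m)) := by
        rw [show n + v + 2 * m = n + v + m + m by ring]
        linear_combination (-(lambdaP P (n + v) * lambdaP P (n + v + m + m))) *
          lambdaP_mul_self P (n + v + m)
    _ = 1 := by
        rw [h₀, h₁, ← mul_pow]
        rcases hκ with rfl | rfl <;> norm_num

end Liouville

/-- Assuming the Matomäki–Radziwiłł two-point bound, if `κ_P^H` exists
and `|κ_P^H| = 1` for some non-empty `H`, then `P = ∅`. -/
theorem stmt_3
    (hMR : ∀ Q : Set ℕ, (∀ q ∈ Q, Nat.Prime q) → Q.Nonempty → ∀ h : ℕ, 1 ≤ h →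
      Filter.limsup (fun x : ℕ =>
        |(∑ n ∈ Finset.Icc 1 x, lambdaP Q n * lambdaP Q (n + h)) / (x : ℝ)|)
        Filter.atTop < 1)
    (P : Set ℕ) (hP : ∀ q ∈ P, Nat.Prime q)
    (H : Finset ℕ) (hH : H.Nonempty) (κ : ℝ)
    (hκ : Filter.Tendsto (cesaroAvg P H) Filter.atTop (nhds κ))
    (habs : |κ| = 1) :
    P = ∅ := by
  by_contra hP₀
  have hκ₁ : κ = 1 ∨ κ = -1 := (abs_eq zero_le_one).mp habs
  have hE : HasDensity {n | LambdaPH P H n ≠ κ} 0 :=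
    (tendsto_cesaroMean_iff_hasDensity_zero (LambdaPH_eq_one_or_neg_one P H) hκ₁).mp hκ
  obtain ⟨S, v, m, hm, hS⟩ := exists_sum_sum_eq_add H hH
  have hB : HasDensity {n | lambdaP P n * lambdaP P (n + 2 * m) ≠ 1} 0 := by
    rw [← hasDensity_zero_preimage_add_iff _ v]
    refine (hasDensity_zero_biUnion (S ∪ S.image (· + m))
      fun t _ => (hasDensity_zero_preimage_add_iff _ t).mpr hE).zero_mono fun n hn => ?_
    by_contra hgood
    simp only [Set.mem_iUnion, Set.mem_ofPred_eq, not_exists, not_not] at hgood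
    exact hn (lambdaP_mul_lambdaP_add_two_mul_eq_one hS hκ₁ hgood)
  have hcorr := (tendsto_cesaroMean_iff_hasDensity_zero
    (fun n => lambdaP_mul_lambdaP_eq_one_or_neg_one P n (n + 2 * m)) (Or.inl rfl)).mpr hB
  have hlim : limsup (fun x => |cesaroMean (fun n => lambdaP P n * lambdaP P (n + 2 * m)) x|)
      atTop = 1 := by
    simpa using hcorr.abs.limsup_eq
  exact (hMR P hP (Set.nonempty_iff_ne_empty.mpr hP₀) (2 * m) (by omega)).ne hlim
end

section
/- Suppose P₁ and P₂ are non-empty, mutually disjoint subsets of the primes. Then for any A ∈ 𝒜_{P₁} and B ∈ 𝒜_{P₂}, the natural densities of A, B, and A ∩ B exist and δ(A ∩ B) = δ(A) · δ(B). -/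
open Filter Topology
open scoped symmDiff Classical

/-!
A set in `𝒜_P` is periodic with a `P`-smooth period `M`, and a set of period `M` has density
equal to the proportion of residues modulo `M` that it contains. For disjoint `P₁`, `P₂` the
periods `M` and `N` of `A` and `B` are coprime, so by the Chinese remainder theorem the residues
modulo `M N` lying in `A ∩ B` correspond to pairs of residues modulo `M` in `A` and modulo `N`
in `B`.
-/

open Function

namespace Nat

variable {p q : ℕ → Prop} [DecidablePred p] [DecidablePred q] {M N : ℕ}

theorem count_add_of_periodic (hp : Periodic p M) (n : ℕ) :
    count p (M + n) = count p M + count p n := by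
  have hp' : ∀ k, p (k + M) = p k := hp
  simp_rw [count_add, add_comm M, hp']

theorem count_mul_add_of_periodic (hp : Periodic p M) (k n : ℕ) :
    count p (k * M + n) = k * count p M + count p n := by
  induction k with
  | zero => simp
  | succ k ih => rw [add_mul, one_mul, add_comm _ M, add_assoc, count_add_of_periodic hp, ih]; ring

theorem count_and_of_coprime (hp : Periodic p M) (hq : Periodic q N) (hMN : M.Coprime N) :
    count (fun n => p n ∧ q n) (M * N) = count p M * count q N := by
  rcases M.eq_zero_or_pos with rfl | hM
  · simp
  rcases N.eq_zero_or_pos with rfl | hN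
  · simp
  simp only [count_eq_card_filter_range, ← Finset.card_product, ← Finset.filter_product]
  refine Finset.card_nbij' (fun n => (n % M, n % N)) (fun x => chineseRemainder hMN x.1 x.2)
    ?_ ?_ ?_ ?_ <;>
    simp only [Set.MapsTo, Set.LeftInvOn, Set.RightInvOn, Prod.forall, Finset.mem_coe,
      Finset.mem_filter, Finset.mem_product, Finset.mem_range]
  · intro n hn
    exact ⟨⟨mod_lt n hM, mod_lt n hN⟩, hp.map_mod_nat n ▸ hn.2.1, hq.map_mod_nat n ▸ hn.2.2⟩
  · rintro a b ⟨⟨ha, hb⟩, hpa, hqb⟩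
    obtain ⟨hca, hcb⟩ := (chineseRemainder hMN a b).2
    refine ⟨chineseRemainder_lt_mul hMN a b hM.ne' hN.ne', ?_, ?_⟩
    · rwa [← hp.map_mod_nat, mod_eq_of_modEq hca ha]
    · rwa [← hq.map_mod_nat, mod_eq_of_modEq hcb hb]
  · intro n hn
    have hcrt := chineseRemainder_modEq_unique hMN (mod_modEq n M).symm (mod_modEq n N).symm
    exact hcrt.symm.eq_of_lt_of_lt (chineseRemainder_lt_mul hMN _ _ hM.ne' hN.ne') hn.1
  · rintro a b ⟨⟨ha, hb⟩, -⟩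
    obtain ⟨hca, hcb⟩ := (chineseRemainder hMN a b).2
    exact Prod.ext (mod_eq_of_modEq hca ha) (mod_eq_of_modEq hcb hb)

theorem abs_count_div_sub_count_div_le (hp : Periodic p M) (hM : 0 < M) {x : ℕ} (hx : 0 < x) :
    |(count p x : ℝ) / x - count p M / M| ≤ M / x := by
  have hcount := count_mul_add_of_periodic hp (x / M) (x % M)
  rw [div_add_mod' x M] at hcount
  set r := x % M
  set c := count p M
  set e := count p r
  have hr : (r : ℝ) < M := by exact_mod_cast mod_lt x hM
  have he : (e : ℝ) ≤ r := by exact_mod_cast count_le p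
  have hc : (c : ℝ) ≤ M := by exact_mod_cast count_le p
  have hnum : (count p x : ℝ) * M - x * c = e * M - r * c := by
    have hx : (x : ℝ) = (x / M : ℕ) * M + r := by exact_mod_cast (div_add_mod' x M).symm
    rw [hcount, hx]; push_cast; ring
  have hbound : |(e : ℝ) * M - r * c| ≤ M * M :=
    abs_le.2 ⟨by nlinarith [e.cast_nonneg (α := ℝ)], by nlinarith [c.cast_nonneg (α := ℝ)]⟩
  have hxpos : (0 : ℝ) < x := by exact_mod_cast hx
  have hMpos : (0 : ℝ) < M := by exact_mod_cast hM
  rw [div_sub_div _ _ hxpos.ne' hMpos.ne', abs_div, abs_of_pos (mul_pos hxpos hMpos),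
    div_le_div_iff₀ (mul_pos hxpos hMpos) hxpos, hnum]
  calc _ ≤ (M : ℝ) * M * x := by gcongr
    _ = M * (x * M) := by ring

theorem tendsto_count_div_of_periodic (hp : Periodic p M) (hM : 0 < M) :
    Tendsto (fun x : ℕ => (count p x : ℝ) / x) atTop (𝓝 (count p M / M)) := by
  rw [← tendsto_sub_nhds_zero_iff]
  refine squeeze_zero_norm' ?_ (tendsto_const_div_atTop_nhds_zero_nat (M : ℝ))
  filter_upwards [eventually_gt_atTop 0] with x hx
  exact abs_count_div_sub_count_div_le hp hM hx

end Nat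

-- `countIn` counts in `[1, x]`, `Nat.count` in `[0, x)`.
theorem countIn_eq_count (A : Set ℕ) (x : ℕ) :
    countIn A x = Nat.count (fun k => k + 1 ∈ A) x := by
  rw [countIn, Nat.count_eq_card_filter_range]
  refine Finset.card_nbij' (· - 1) (· + 1) ?_ ?_ ?_ ?_ <;>
    simp only [Set.MapsTo, Set.LeftInvOn, Set.RightInvOn, Finset.mem_coe, Finset.mem_filter,
      Finset.mem_range, Finset.mem_Icc]
  · rintro n ⟨⟨h1, hx⟩, hA⟩
    exact ⟨by omega, by rwa [Nat.sub_add_cancel h1]⟩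
  · exact fun n ⟨hx, hA⟩ => ⟨⟨by omega, by omega⟩, hA⟩
  · exact fun n ⟨⟨h1, _⟩, _⟩ => Nat.sub_add_cancel h1
  · exact fun n _ => Nat.add_sub_cancel n 1

theorem hasDensity_of_periodic {A : Set ℕ} {M : ℕ} (hA : Periodic (· ∈ A) M) (hM : 0 < M) :
    HasDensity A (Nat.count (fun k => k + 1 ∈ A) M / M) := by
  simp only [HasDensity, countIn_eq_count]
  exact Nat.tendsto_count_div_of_periodic (hA.add_const 1) hM

theorem periodic_mem_Cset (r : ℕ) {s M : ℕ} (h : s ∣ M) : Periodic (· ∈ Cset r s) M := by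
  intro n
  have hshift : ((n + M : ℕ) : ℤ) ≡ n [ZMOD s] := by
    obtain ⟨k, rfl⟩ := h
    push_cast
    exact Int.add_mul_emod_self_left _ _ _
  exact propext ⟨hshift.symm.trans, hshift.trans⟩

theorem exists_periodic_of_mem_calA {P A : Set ℕ} (hA : A ∈ calA P) :
    ∃ M ∈ SmoothP P, Periodic (· ∈ A) M := by
  obtain ⟨F, hF, rfl⟩ := hA
  refine ⟨∏ q ∈ F, q.2, ⟨Finset.prod_pos fun q hq => (hF q hq).1, fun p hp hdvd => ?_⟩, ?_⟩
  · obtain ⟨q, hq, hpq⟩ := (hp.prime.dvd_finsetProd_iff _).mp hdvd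
    exact (hF q hq).2 p hp hpq
  · intro n
    simp only [Set.mem_iUnion]
    exact propext <| exists₂_congr fun q hq =>
      Iff.of_eq (periodic_mem_Cset q.1 (Finset.dvd_prod_of_mem _ hq) n)

theorem coprime_of_mem_SmoothP {P₁ P₂ : Set ℕ} (h : Disjoint P₁ P₂) {M N : ℕ}
    (hM : M ∈ SmoothP P₁) (hN : N ∈ SmoothP P₂) : M.Coprime N :=
  Nat.coprime_of_dvd fun p hp hpM hpN => h.notMem_of_mem_left (hM.2 p hp hpM) (hN.2 p hp hpN)

theorem stmt_11_general (P₁ P₂ : Set ℕ)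
    (hdisj : Disjoint P₁ P₂)
    (A B : Set ℕ) (hA : A ∈ calA P₁) (hB : B ∈ calA P₂) :
    ∃ a b : ℝ, HasDensity A a ∧ HasDensity B b ∧ HasDensity (A ∩ B) (a * b) := by
  obtain ⟨M, hM, hAper⟩ := exists_periodic_of_mem_calA hA
  obtain ⟨N, hN, hBper⟩ := exists_periodic_of_mem_calA hB
  have hABper : Periodic (· ∈ A ∩ B) (M * N) := fun n =>
    congrArg₂ And (by simpa [mul_comm] using hAper.nat_mul N n) (hBper.nat_mul M n)
  refine ⟨_, _, hasDensity_of_periodic hAper hM.1, hasDensity_of_periodic hBper hN.1, ?_⟩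
  convert hasDensity_of_periodic hABper (mul_pos hM.1 hN.1) using 1
  simp_rw [Set.mem_inter_iff, Nat.count_and_of_coprime (hAper.add_const 1) (hBper.add_const 1)
    (coprime_of_mem_SmoothP hdisj hM hN)]
  push_cast
  exact div_mul_div_comm _ _ _ _

/-- For non-empty disjoint sets of primes `P₁, P₂`, any `A ∈ 𝒜_{P₁}`
and `B ∈ 𝒜_{P₂}` have natural densities, `A ∩ B` has one, and `δ(A ∩ B) = δ(A) δ(B)`. -/
theorem stmt_11 (P₁ P₂ : Set ℕ) (hP₁ : ∀ q ∈ P₁, Nat.Prime q)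
    (hP₂ : ∀ q ∈ P₂, Nat.Prime q) (hne₁ : P₁.Nonempty) (hne₂ : P₂.Nonempty)
    (hdisj : Disjoint P₁ P₂)
    (A B : Set ℕ) (hA : A ∈ calA P₁) (hB : B ∈ calA P₂) :
    ∃ a b : ℝ, HasDensity A a ∧ HasDensity B b ∧ HasDensity (A ∩ B) (a * b) :=
  stmt_11_general P₁ P₂ hdisj A B hA hB
end

section
/- Let H be a non-empty finite set of non-negative integers, let P' be a finite set of primes, and let p be a prime not in P'. Then the natural densities η_{P'}^H := δ(N_{P'}^H), η_p^H := δ(N_{{p}}^H) and η_{P'∪{p}}^H := δ(N_{P'∪{p}}^H) all exist and satisfy η_{P'∪{p}}^H = η_{P'}^H (1 − η_p^H) + η_p^H (1 − η_{P'}^H). -/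
open Filter Topology
open scoped symmDiff Classical

/-! For a finite set `Q` of primes, capping every exponent `v_q(n + h)` at `m` turns `Λ_Q^H` into a
function of period `∏_{q ∈ Q} q ^ m`, which differs from `Λ_Q^H` only at those `n` with
`q ^ m ∣ n + h`, a set of upper density `O(2 ^ (-m))`. So `Λ_Q^H` is a limit in Cesàro mean of
periodic functions and has a mean. As `Λ_{P' ∪ {p}}^H = Λ_{P'}^H Λ_p^H` and the periods of the
approximants for `P'` and for `{p}` are coprime, the Chinese remainder theorem makes the means
multiply. Finally `δ(N_P^H) = (1 - mean Λ_P^H) / 2`, and `A = 1 - 2a`, `B = 1 - 2b` turn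
`(1 - AB) / 2` into `a (1 - b) + b (1 - a)`. -/

open Finset Function

def HasMean (f : ℕ → ℝ) (L : ℝ) : Prop :=
  Tendsto (fun x : ℕ => (∑ n ∈ Icc 1 x, f n) / x) atTop (𝓝 L)

theorem HasMean.unique {f : ℕ → ℝ} {a b : ℝ} (ha : HasMean f a) (hb : HasMean f b) : a = b :=
  tendsto_nhds_unique ha hb

namespace Function.Periodic

variable {f g : ℕ → ℝ} {S T : ℕ}

theorem sum_Icc_add (hf : Periodic f T) (x : ℕ) :
    ∑ n ∈ Icc 1 (x + T), f n = ∑ n ∈ Icc 1 x, f n + ∑ n ∈ Icc 1 T, f n := by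
  induction x with
  | zero => simp
  | succ x ih =>
    rw [show x + 1 + T = x + T + 1 by ring, sum_Icc_succ_top (by omega), ih,
      sum_Icc_succ_top (by omega), show x + T + 1 = x + 1 + T by ring, hf]
    ring

theorem sum_Icc_eq_sum_range (hf : Periodic f T) :
    ∑ n ∈ Icc 1 T, f n = ∑ n ∈ range T, f n := by
  have hshift : ∑ n ∈ Icc 1 T, f n = ∑ n ∈ range T, f (n + 1) := by
    rw [← Finset.Ico_add_one_right_eq_Icc, sum_Ico_eq_sum_range, Nat.add_sub_cancel]
    simp only [add_comm 1]
  have := sum_range_succ f T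
  rw [sum_range_succ', hf.eq] at this
  linarith

theorem hasMean (hf : Periodic f T) (hT : 0 < T) :
    HasMean f ((∑ n ∈ range T, f n) / T) := by
  set c := (∑ n ∈ range T, f n) / T
  -- the discrepancy `∑_{n ≤ x} f n - c x` is itself `T`-periodic, hence bounded
  set e : ℕ → ℝ := fun x => ∑ n ∈ Icc 1 x, f n - x * c
  have he : Periodic e T := fun x => by
    simp only [e, hf.sum_Icc_add, hf.sum_Icc_eq_sum_range, c]
    push_cast
    field_simp
    ring
  set B := ∑ i ∈ range T, |e i|
  have hB : ∀ x, |e x| ≤ B := fun x => by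
    rw [← he.map_mod_nat]
    exact single_le_sum (fun i _ => abs_nonneg (e i)) (mem_range.2 (Nat.mod_lt x hT))
  have hdiff : ∀ᶠ x : ℕ in atTop, (∑ n ∈ Icc 1 x, f n) / x = c + e x / x := by
    filter_upwards [eventually_gt_atTop 0] with x hx
    simp only [e]
    field_simp
    ring
  have hdecay : Tendsto (fun x : ℕ => e x / x) atTop (𝓝 0) := by
    refine squeeze_zero_norm (fun x => ?_) (tendsto_const_div_atTop_nhds_zero_nat B)
    rw [Real.norm_eq_abs, abs_div, Nat.abs_cast]
    exact div_le_div_of_nonneg_right (hB x) (Nat.cast_nonneg x)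
  refine Tendsto.congr' (EventuallyEq.symm hdiff) ?_
  simpa using tendsto_const_nhds.add hdecay

theorem sum_range_mul_mul (hf : Periodic f S) (hg : Periodic g T) (hST : S.Coprime T) :
    ∑ n ∈ range (S * T), f n * g n = (∑ n ∈ range S, f n) * ∑ n ∈ range T, g n := by
  have hpos : ∀ n ∈ range (S * T), S ≠ 0 ∧ T ≠ 0 := fun n hn => by
    constructor <;> rintro rfl <;> simp at hn
  rw [sum_mul_sum, ← sum_product']
  refine sum_nbij' (fun n => (n % S, n % T)) (fun r => Nat.chineseRemainder hST r.1 r.2)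
    ?_ ?_ ?_ ?_ ?_
  · intro n hn
    simp only [mem_product, mem_range]
    exact ⟨Nat.mod_lt _ (Nat.pos_of_ne_zero (hpos n hn).1),
      Nat.mod_lt _ (Nat.pos_of_ne_zero (hpos n hn).2)⟩
  · rintro ⟨a, b⟩ hab
    simp only [mem_product, mem_range] at hab
    exact mem_range.2 (Nat.chineseRemainder_lt_mul hST a b (by omega) (by omega))
  · intro n hn
    exact ((Nat.chineseRemainder_modEq_unique hST (Nat.mod_modEq n S).symm
      (Nat.mod_modEq n T).symm).eq_of_lt_of_lt (mem_range.1 hn)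
      (Nat.chineseRemainder_lt_mul hST _ _ (hpos n hn).1 (hpos n hn).2)).symm
  · rintro ⟨a, b⟩ hab
    simp only [mem_product, mem_range] at hab
    have hcr := (Nat.chineseRemainder hST a b).2
    simp only [Prod.mk.injEq]
    exact ⟨Eq.trans hcr.1 (Nat.mod_eq_of_lt hab.1), Eq.trans hcr.2 (Nat.mod_eq_of_lt hab.2)⟩
  · intro n _
    rw [hf.map_mod_nat, hg.map_mod_nat]

end Function.Periodic

theorem HasMean.mul_of_coprime_periods {f g : ℕ → ℝ} {S T : ℕ} {a b : ℝ} (ha : HasMean f a)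
    (hb : HasMean g b) (hf : Periodic f S) (hg : Periodic g T) (hS : 0 < S) (hT : 0 < T)
    (hST : S.Coprime T) : HasMean (f * g) (a * b) := by
  have hfg : Periodic (f * g) (S * T) := (mul_comm T S ▸ hf.nat_mul T).mul (hg.nat_mul S)
  rw [ha.unique (hf.hasMean hS), hb.unique (hg.hasMean hT), div_mul_div_comm, ← Nat.cast_mul,
    ← hf.sum_range_mul_mul hg hST]
  exact hfg.hasMean (Nat.mul_pos hS hT)

def IsMeanApprox (f : ℕ → ℝ) (g : ℕ → ℕ → ℝ) : Prop :=
  ∃ ε : ℕ → ℝ, Tendsto ε atTop (𝓝 0) ∧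
    ∃ C : ℝ, ∀ m x, ∑ n ∈ Icc 1 x, |f n - g m n| ≤ ε m * x + C

theorem abs_sum_div_sub_sum_div_le {f g : ℕ → ℝ} {e C : ℝ} {x : ℕ} (hx : 0 < x)
    (h : ∑ n ∈ Icc 1 x, |f n - g n| ≤ e * x + C) :
    |(∑ n ∈ Icc 1 x, f n) / x - (∑ n ∈ Icc 1 x, g n) / x| ≤ e + C / x := by
  have hx' : (0 : ℝ) < x := Nat.cast_pos.2 hx
  rw [div_sub_div_same, ← sum_sub_distrib, abs_div, Nat.abs_cast, div_le_iff₀ hx', add_mul,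
    div_mul_cancel₀ _ hx'.ne']
  exact (abs_sum_le_sum_abs _ _).trans h

namespace IsMeanApprox

variable {f f' : ℕ → ℝ} {g g' : ℕ → ℕ → ℝ} {μ : ℕ → ℝ}

theorem mul (hf : IsMeanApprox f g) (hf' : IsMeanApprox f' g') (hf'1 : ∀ n, |f' n| ≤ 1)
    (hg1 : ∀ m n, |g m n| ≤ 1) : IsMeanApprox (f * f') (fun m => g m * g' m) := by
  obtain ⟨ε, hε, C, hC⟩ := hf
  obtain ⟨ε', hε', C', hC'⟩ := hf'
  refine ⟨ε + ε', by simpa [Pi.add_def] using hε.add hε', C + C', fun m x => ?_⟩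
  have hpt : ∀ n, |f n * f' n - g m n * g' m n| ≤ |f n - g m n| + |f' n - g' m n| :=
    fun n => calc |f n * f' n - g m n * g' m n|
        = |(f n - g m n) * f' n + g m n * (f' n - g' m n)| := by ring_nf
      _ ≤ |f n - g m n| * |f' n| + |g m n| * |f' n - g' m n| := by
        rw [← abs_mul, ← abs_mul]; exact abs_add_le _ _
      _ ≤ |f n - g m n| + |f' n - g' m n| := by
        gcongr
        · exact mul_le_of_le_one_right (abs_nonneg _) (hf'1 n)
        · exact mul_le_of_le_one_left (abs_nonneg _) (hg1 m n)
  calc ∑ n ∈ Icc 1 x, |(f * f') n - g m n * g' m n|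
      ≤ ∑ n ∈ Icc 1 x, (|f n - g m n| + |f' n - g' m n|) := sum_le_sum fun n _ => hpt n
    _ ≤ (ε m * x + C) + (ε' m * x + C') := by
      rw [sum_add_distrib]
      exact add_le_add (hC m x) (hC' m x)
    _ = (ε + ε') m * x + (C + C') := by simp only [Pi.add_apply]; ring

theorem cauchySeq (h : IsMeanApprox f g) (hg : ∀ m, HasMean (g m) (μ m)) : CauchySeq μ := by
  obtain ⟨ε, hε, C, hC⟩ := h
  have hdist : ∀ m m', dist (μ m) (μ m') ≤ ε m + ε m' := fun m m' => by
    have hbound : Tendsto (fun x : ℕ => ε m + ε m' + (C + C) / x) atTop (𝓝 (ε m + ε m')) := by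
      simpa using tendsto_const_nhds.add (tendsto_const_div_atTop_nhds_zero_nat (C + C))
    refine le_of_tendsto_of_tendsto ((hg m).dist (hg m')) hbound ?_
    filter_upwards [eventually_gt_atTop 0] with x hx
    have h1 := abs_sum_div_sub_sum_div_le hx (hC m x)
    have h2 := abs_sum_div_sub_sum_div_le hx (hC m' x)
    rw [Real.dist_eq, add_div]
    linarith [abs_sub_le ((∑ n ∈ Icc 1 x, g m n) / (x : ℝ)) ((∑ n ∈ Icc 1 x, f n) / x)
      ((∑ n ∈ Icc 1 x, g m' n) / x), abs_sub_comm ((∑ n ∈ Icc 1 x, g m n) / (x : ℝ))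
      ((∑ n ∈ Icc 1 x, f n) / x)]
  refine Metric.cauchySeq_iff'.2 fun δ hδ => ?_
  obtain ⟨N, hN⟩ := eventually_atTop.1 (hε.eventually (gt_mem_nhds (half_pos hδ)))
  exact ⟨N, fun m hm => (hdist m N).trans_lt (by linarith [hN m hm, hN N le_rfl])⟩

theorem hasMean {L : ℝ} (h : IsMeanApprox f g) (hg : ∀ m, HasMean (g m) (μ m))
    (hμ : Tendsto μ atTop (𝓝 L)) : HasMean f L := by
  obtain ⟨ε, hε, C, hC⟩ := h
  refine TendstoUniformlyOnFilter.tendsto_of_eventually_tendsto (p := atTop)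
    (F := fun m x => (∑ n ∈ Icc 1 x, g m n) / x) ?_ (.of_forall hg) hμ
  refine Metric.tendstoUniformlyOnFilter_iff.2 fun δ hδ => ?_
  have hεδ := hε.eventually (gt_mem_nhds (half_pos hδ))
  have hCδ := ((tendsto_const_div_atTop_nhds_zero_nat C).eventually
    (gt_mem_nhds (half_pos hδ))).and (eventually_gt_atTop 0)
  filter_upwards [hεδ.prod_mk hCδ] with ⟨m, x⟩ ⟨hm, hx, hx0⟩
  rw [Real.dist_eq]
  linarith [abs_sum_div_sub_sum_div_le hx0 (hC m x)]

theorem exists_hasMean (h : IsMeanApprox f g) (hg : ∀ m, HasMean (g m) (μ m)) :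
    ∃ L, Tendsto μ atTop (𝓝 L) ∧ HasMean f L :=
  let ⟨L, hL⟩ := cauchySeq_tendsto_of_complete (h.cauchySeq hg)
  ⟨L, hL, h.hasMean hg hL⟩

end IsMeanApprox

section Liouville

variable {P P' : Set ℕ} {H : Finset ℕ}

theorem OmegaP_union (h : Disjoint P P') (n : ℕ) :
    OmegaP (P ∪ P') n = OmegaP P n + OmegaP P' n := by
  unfold OmegaP
  rw [← Finsupp.sum_add]
  refine Finsupp.sum_congr fun q _ => ?_
  by_cases hq : q ∈ P
  · simp [hq, Set.disjoint_left.1 h hq]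
  · by_cases hq' : q ∈ P' <;> simp [hq, hq']

theorem LambdaPH_union (h : Disjoint P P') (H : Finset ℕ) :
    LambdaPH (P ∪ P') H = LambdaPH P H * LambdaPH P' H := by
  ext n
  simp only [LambdaPH, lambdaP, OmegaP_union h, pow_add, Pi.mul_apply, prod_mul_distrib]

theorem abs_lambdaP (P : Set ℕ) (n : ℕ) : |lambdaP P n| = 1 := by
  simp [lambdaP]

theorem abs_LambdaPH (P : Set ℕ) (H : Finset ℕ) (n : ℕ) : |LambdaPH P H n| = 1 := by
  simp [LambdaPH, abs_prod, abs_lambdaP]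

theorem HasMean.hasDensity_NPH {L : ℝ} (h : HasMean (LambdaPH P H) L) :
    HasDensity (NPH P H) ((1 - L) / 2) := by
  have hind : ∀ n, (if n ∈ NPH P H then (1 : ℝ) else 0) = (1 - LambdaPH P H n) / 2 := fun n => by
    rcases (abs_eq zero_le_one).1 (abs_LambdaPH P H n) with h1 | h1 <;> norm_num [NPH, h1]
  have hcount : ∀ x, (countIn (NPH P H) x : ℝ) = (x - ∑ n ∈ Icc 1 x, LambdaPH P H n) / 2 :=
    fun x => by
      rw [countIn, ← sum_boole]
      simp [hind, ← sum_div, sum_sub_distrib]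
  have heq : ∀ᶠ x : ℕ in atTop,
      (1 - (∑ n ∈ Icc 1 x, LambdaPH P H n) / x) / 2 = (countIn (NPH P H) x : ℝ) / x := by
    filter_upwards [eventually_gt_atTop 0] with x hx
    rw [hcount]
    field_simp
  exact ((tendsto_const_nhds.sub h).div_const 2).congr' heq

end Liouville

/-- With `M = ∏_{q ∈ Q} q ^ m`, passing to `gcd(n + h, M)` caps each exponent `v_q(n + h)`,
`q ∈ Q`, at `m`. -/
noncomputable def LambdaPHMod (P : Set ℕ) (H : Finset ℕ) (M n : ℕ) : ℝ :=
  ∏ h ∈ H, lambdaP P ((n + h).gcd M)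

section Truncation

variable {Q : Finset ℕ} {H : Finset ℕ}

theorem prod_pow_pos (hQ : ∀ q ∈ Q, q.Prime) (m : ℕ) : 0 < ∏ q ∈ Q, q ^ m :=
  prod_pos fun q hq => pow_pos (hQ q hq).pos m

theorem LambdaPHMod_periodic (P : Set ℕ) (H : Finset ℕ) (M : ℕ) :
    Periodic (LambdaPHMod P H M) M := fun n => by
  simp only [LambdaPHMod, add_right_comm n M, Nat.gcd_add_self_left]

theorem abs_LambdaPHMod (P : Set ℕ) (H : Finset ℕ) (M n : ℕ) : |LambdaPHMod P H M n| = 1 := by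
  simp [LambdaPHMod, abs_prod, abs_lambdaP]

theorem OmegaP_coe_finset (Q : Finset ℕ) (n : ℕ) :
    OmegaP ↑Q n = ∑ q ∈ Q, n.factorization q := by
  rw [OmegaP, Finsupp.sum]
  simp only [mem_coe, sum_ite_mem]
  exact sum_subset inter_subset_right fun q hqQ hq =>
    Finsupp.notMem_support_iff.1 fun hq' => hq (mem_inter.2 ⟨hq', hqQ⟩)

theorem OmegaP_gcd_prod_pow (hQ : ∀ q ∈ Q, q.Prime) {k m : ℕ} (hk : ∀ q ∈ Q, ¬q ^ m ∣ k) :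
    OmegaP ↑Q (k.gcd (∏ q ∈ Q, q ^ m)) = OmegaP ↑Q k := by
  rw [OmegaP_coe_finset, OmegaP_coe_finset]
  refine sum_congr rfl fun q hq => ?_
  have hk0 : k ≠ 0 := by rintro rfl; exact hk q hq (dvd_zero _)
  have hM0 : ∏ r ∈ Q, r ^ m ≠ 0 := (prod_pow_pos hQ m).ne'
  have hlt : k.factorization q < m := not_le.1 fun hle =>
    hk q hq (((hQ q hq).pow_dvd_iff_le_factorization hk0).2 hle)
  have hle : m ≤ (∏ r ∈ Q, r ^ m).factorization q :=
    ((hQ q hq).pow_dvd_iff_le_factorization hM0).1 (dvd_prod_of_mem _ hq)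
  rw [Nat.factorization_gcd hk0 hM0, Finsupp.inf_apply]
  exact min_eq_left (by omega)

theorem abs_LambdaPH_sub_LambdaPHMod_le (hQ : ∀ q ∈ Q, q.Prime) (m n : ℕ) :
    |LambdaPH ↑Q H n - LambdaPHMod ↑Q H (∏ q ∈ Q, q ^ m) n| ≤
      2 * ∑ h ∈ H, ∑ q ∈ Q, if q ^ m ∣ n + h then (1 : ℝ) else 0 := by
  by_cases hgood : ∀ h ∈ H, ∀ q ∈ Q, ¬q ^ m ∣ n + h
  · have heq : LambdaPHMod ↑Q H (∏ q ∈ Q, q ^ m) n = LambdaPH ↑Q H n :=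
      prod_congr rfl fun h hh => by rw [lambdaP, OmegaP_gcd_prod_pow hQ (hgood h hh), lambdaP]
    rw [heq, sub_self, abs_zero]
    positivity
  push Not at hgood
  obtain ⟨h, hh, q, hq, hdvd⟩ := hgood
  have hone : (1 : ℝ) ≤ ∑ h ∈ H, ∑ q ∈ Q, if q ^ m ∣ n + h then (1 : ℝ) else 0 :=
    calc (1 : ℝ) = if q ^ m ∣ n + h then 1 else 0 := by rw [if_pos hdvd]
      _ ≤ ∑ q ∈ Q, if q ^ m ∣ n + h then (1 : ℝ) else 0 :=
        single_le_sum (f := fun q => if q ^ m ∣ n + h then (1 : ℝ) else 0)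
          (fun _ _ => by positivity) hq
      _ ≤ _ := single_le_sum (f := fun h => ∑ q ∈ Q, if q ^ m ∣ n + h then (1 : ℝ) else 0)
          (fun _ _ => by positivity) hh
  calc _ ≤ |LambdaPH ↑Q H n| + |LambdaPHMod ↑Q H (∏ q ∈ Q, q ^ m) n| := abs_sub _ _
    _ = 2 := by rw [abs_LambdaPH, abs_LambdaPHMod]; norm_num
    _ ≤ _ := by linarith

theorem card_filter_dvd_add_le {d : ℕ} (hd : 0 < d) (h x : ℕ) :
    (#{n ∈ Icc 1 x | d ∣ n + h} : ℝ) ≤ x / d + h := by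
  have hcard : #{n ∈ Icc 1 x | d ∣ n + h} ≤ (x + h) / d := by
    rw [← Nat.Ioc_filter_dvd_card_eq_div]
    refine card_le_card_of_injOn (· + h) (fun n hn => ?_) fun _ _ _ _ => Nat.add_right_cancel
    simp only [coe_filter, mem_Icc, Set.mem_ofPred_eq, mem_Ioc] at hn ⊢
    omega
  have hd' : (1 : ℝ) ≤ d := Nat.one_le_cast.2 hd
  calc (#{n ∈ Icc 1 x | d ∣ n + h} : ℝ) ≤ ((x + h) / d : ℕ) := by exact_mod_cast hcard
    _ ≤ ((x + h : ℕ) : ℝ) / d := Nat.cast_div_le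
    _ ≤ x / d + h := by
      rw [Nat.cast_add, add_div]
      gcongr
      exact div_le_self (Nat.cast_nonneg h) hd'

theorem isMeanApprox_LambdaPH (hQ : ∀ q ∈ Q, q.Prime) (H : Finset ℕ) :
    IsMeanApprox (LambdaPH ↑Q H) fun m => LambdaPHMod ↑Q H (∏ q ∈ Q, q ^ m) := by
  refine ⟨fun m => 2 * (#H * #Q) * (1 / 2) ^ m, ?_, 2 * ∑ h ∈ H, ∑ _q ∈ Q, (h : ℝ),
    fun m x => ?_⟩
  · simpa using (tendsto_pow_atTop_nhds_zero_of_lt_one (r := (1 / 2 : ℝ)) (by norm_num)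
      (by norm_num)).const_mul (2 * (#H * #Q : ℝ))
  have hcount : ∀ h, ∀ q ∈ Q, (#{n ∈ Icc 1 x | q ^ m ∣ n + h} : ℝ) ≤ x * (1 / 2) ^ m + h :=
    fun h q hq => by
      have hq2 : (2 : ℝ) ^ m ≤ ((q ^ m : ℕ) : ℝ) := by
        push_cast; gcongr; exact_mod_cast (hQ q hq).two_le
      calc _ ≤ x / ((q ^ m : ℕ) : ℝ) + h :=
            card_filter_dvd_add_le (pow_pos (hQ q hq).pos m) h x
        _ ≤ x / 2 ^ m + h := by gcongr
        _ = x * (1 / 2) ^ m + h := by rw [one_div_pow, mul_one_div]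
  calc ∑ n ∈ Icc 1 x, |LambdaPH ↑Q H n - LambdaPHMod ↑Q H (∏ q ∈ Q, q ^ m) n|
      ≤ ∑ n ∈ Icc 1 x, 2 * ∑ h ∈ H, ∑ q ∈ Q, if q ^ m ∣ n + h then (1 : ℝ) else 0 :=
        sum_le_sum fun n _ => abs_LambdaPH_sub_LambdaPHMod_le hQ m n
    _ = 2 * ∑ h ∈ H, ∑ q ∈ Q, (#{n ∈ Icc 1 x | q ^ m ∣ n + h} : ℝ) := by
        rw [← mul_sum, sum_comm]
        simp_rw [sum_comm (s := Icc 1 x), sum_boole]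
    _ ≤ 2 * ∑ h ∈ H, ∑ q ∈ Q, ((x : ℝ) * (1 / 2) ^ m + h) := by
        gcongr with h _ q hq
        exact hcount h q hq
    _ = 2 * (#H * #Q) * (1 / 2) ^ m * x + 2 * ∑ h ∈ H, ∑ _q ∈ Q, (h : ℝ) := by
        simp only [sum_add_distrib, sum_const, nsmul_eq_mul]
        ring

end Truncation

section Mean

variable {Q R : Finset ℕ} {H : Finset ℕ}

theorem exists_hasMean_LambdaPHMod (hQ : ∀ q ∈ Q, q.Prime) (H : Finset ℕ) (m : ℕ) :
    ∃ μ, HasMean (LambdaPHMod ↑Q H (∏ q ∈ Q, q ^ m)) μ :=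
  ⟨_, (LambdaPHMod_periodic _ H _).hasMean (prod_pow_pos hQ m)⟩

theorem exists_hasMean_LambdaPH (hQ : ∀ q ∈ Q, q.Prime) (H : Finset ℕ) :
    ∃ L, HasMean (LambdaPH ↑Q H) L := by
  choose μ hμ using exists_hasMean_LambdaPHMod hQ H
  obtain ⟨L, -, hL⟩ := (isMeanApprox_LambdaPH hQ H).exists_hasMean hμ
  exact ⟨L, hL⟩

theorem hasMean_LambdaPH_union (hQ : ∀ q ∈ Q, q.Prime) (hR : ∀ r ∈ R, r.Prime)
    (hQR : Disjoint Q R) {a b : ℝ} (ha : HasMean (LambdaPH ↑Q H) a)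
    (hb : HasMean (LambdaPH ↑R H) b) : HasMean (LambdaPH ↑(Q ∪ R) H) (a * b) := by
  choose μ hμ using exists_hasMean_LambdaPHMod hQ H
  choose ν hν using exists_hasMean_LambdaPHMod hR H
  obtain ⟨a', hμa', ha'⟩ := (isMeanApprox_LambdaPH hQ H).exists_hasMean hμ
  obtain ⟨b', hνb', hb'⟩ := (isMeanApprox_LambdaPH hR H).exists_hasMean hν
  rw [ha.unique ha', hb.unique hb']
  have hcop : ∀ m, (∏ q ∈ Q, q ^ m).Coprime (∏ r ∈ R, r ^ m) := fun m =>
    Nat.Coprime.prod_left fun q hq => Nat.Coprime.prod_right fun r hr =>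
      .pow _ _ ((Nat.coprime_primes (hQ q hq) (hR r hr)).2
        fun hqr => disjoint_left.1 hQR hq (hqr ▸ hr))
  rw [coe_union, LambdaPH_union (disjoint_coe.2 hQR)]
  exact ((isMeanApprox_LambdaPH hQ H).mul (isMeanApprox_LambdaPH hR H)
    (fun n => (abs_LambdaPH _ H n).le) fun m n => (abs_LambdaPHMod _ H _ n).le).hasMean
    (fun m => (hμ m).mul_of_coprime_periods (hν m) (LambdaPHMod_periodic _ H _)
      (LambdaPHMod_periodic _ H _) (prod_pow_pos hQ m) (prod_pow_pos hR m) (hcop m))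
    (hμa'.mul hνb')

end Mean

theorem stmt_13_general (H : Finset ℕ) (P' : Set ℕ)
    (hP' : ∀ q ∈ P', Nat.Prime q) (hfin : P'.Finite)
    (p : ℕ) (hp : p.Prime) (hpP : p ∉ P') :
    ∃ a b c : ℝ,
      HasDensity (NPH P' H) a ∧ HasDensity (NPH {p} H) b ∧
      HasDensity (NPH (P' ∪ {p}) H) c ∧
      c = a * (1 - b) + b * (1 - a) := by
  obtain ⟨Q, rfl⟩ := hfin.exists_finset_coe
  have hp' : ∀ q ∈ ({p} : Finset ℕ), q.Prime := by simpa
  obtain ⟨a, ha⟩ := exists_hasMean_LambdaPH hP' H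
  obtain ⟨b, hb⟩ := exists_hasMean_LambdaPH hp' H
  have hab := hasMean_LambdaPH_union hP' hp' (disjoint_singleton_right.2 hpP) ha hb
  rw [coe_singleton] at hb
  rw [coe_union, coe_singleton] at hab
  exact ⟨_, _, _, ha.hasDensity_NPH, hb.hasDensity_NPH, hab.hasDensity_NPH, by ring⟩

/-- For finite `P'`, a prime `p ∉ P'` and non-empty finite `H`, the densities
`η_{P'}^H`, `η_p^H`, `η_{P'∪{p}}^H` exist and satisfy
`η_{P'∪{p}}^H = η_{P'}^H (1 − η_p^H) + η_p^H (1 − η_{P'}^H)`. -/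
theorem stmt_13 (H : Finset ℕ) (hH : H.Nonempty) (P' : Set ℕ)
    (hP' : ∀ q ∈ P', Nat.Prime q) (hfin : P'.Finite)
    (p : ℕ) (hp : p.Prime) (hpP : p ∉ P') :
    ∃ a b c : ℝ,
      HasDensity (NPH P' H) a ∧ HasDensity (NPH {p} H) b ∧
      HasDensity (NPH (P' ∪ {p}) H) c ∧
      c = a * (1 - b) + b * (1 - a) :=
  stmt_13_general H P' hP' hfin p hp hpP
end

section
/- Let p be a prime and H = {h₁,…,h_d} a finite set of d distinct non-negative integers. Then the upper natural density of N_{{p}}^H satisfies δ⁺(N_{{p}}^H) ≤ d/(p+1). -/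
open Filter Topology
open scoped symmDiff Classical

/-!
If `n ∈ N_{{p}}^H`, then `v_p(n + h)` is odd for some `h ∈ H`. In an interval of length `y`,
the integers `m` with `v_p(m)` odd lie in `⋃_{j<k} {p^(2j+1) ∣ m, p^(2j+2) ∤ m} ∪ {p^(2k+1) ∣ m}`,
which has at most `y/(p+1) + y/p^(2k+1) + 2k + 1` elements because
`∑_{j<k} (p^(-2j-1) - p^(-2j-2)) ≤ 1/(p+1)`. Summing over `h ∈ H` and dividing by `x` bounds the
upper density by `|H|/(p+1) + |H|/p^(2k+1)` for every `k`.
-/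

open Finset

namespace Nat

lemma card_filter_dvd_Ioc (q : ℕ) {a b : ℕ} (hab : a ≤ b) :
    #{m ∈ Ioc a b | q ∣ m} = b / q - a / q := by
  rw [← Ioc_filter_dvd_card_eq_div b, ← Ioc_filter_dvd_card_eq_div a,
    ← Ioc_union_Ioc_eq_Ioc (Nat.zero_le a) hab, filter_union,
    card_union_of_disjoint (disjoint_filter_filter (Ioc_disjoint_Ioc_of_le le_rfl))]
  omega

lemma abs_card_filter_dvd_Ioc_sub_le {q : ℕ} (hq : 0 < q) {a b : ℕ} (hab : a ≤ b) :
    |(#{m ∈ Ioc a b | q ∣ m} : ℝ) - ((b : ℝ) - a) / q| ≤ 1 := by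
  rw [card_filter_dvd_Ioc q hab, Nat.cast_sub (Nat.div_le_div_right hab),
    ← Nat.floor_div_eq_div (K := ℝ), ← Nat.floor_div_eq_div (K := ℝ), sub_div, abs_le]
  have := Nat.floor_le (by positivity : (0 : ℝ) ≤ b / q)
  have := Nat.floor_le (by positivity : (0 : ℝ) ≤ a / q)
  have := Nat.sub_one_lt_floor ((b : ℝ) / q)
  have := Nat.sub_one_lt_floor ((a : ℝ) / q)
  constructor <;> linarith

end Nat

lemma card_filter_Icc_one_add (P : ℕ → Prop) [DecidablePred P] (h x : ℕ) :
    #{n ∈ Icc 1 x | P (n + h)} = #{m ∈ Ioc h (x + h) | P m} := by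
  rw [← Icc_add_one_left_eq_Ioc, add_comm h 1, ← map_add_right_Icc, filter_map, card_map]
  rfl

lemma sum_range_inv_pow_odd_sub_inv_pow_even_mul {r : ℝ} (hr : r ≠ 0) (k : ℕ) :
    (∑ j ∈ range k, (1 / r ^ (2 * j + 1) - 1 / r ^ (2 * j + 2))) * (r + 1)
      = 1 - 1 / r ^ (2 * k) := by
  rw [sum_mul]
  convert sum_range_sub' (fun j => 1 / r ^ (2 * j)) k using 2 with j
  · field_simp
    ring
  · simp

lemma sum_range_inv_pow_odd_sub_inv_pow_even_le {r : ℝ} (hr : 0 < r) (k : ℕ) :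
    ∑ j ∈ range k, (1 / r ^ (2 * j + 1) - 1 / r ^ (2 * j + 2)) ≤ 1 / (r + 1) := by
  rw [le_div_iff₀ (by positivity), sum_range_inv_pow_odd_sub_inv_pow_even_mul hr.ne']
  have : 0 < 1 / r ^ (2 * k) := by positivity
  linarith

section OddValuation

variable {p : ℕ} (hp : p.Prime)
include hp

lemma filter_odd_factorization_Ioc_subset (a b k : ℕ) :
    {m ∈ Ioc a b | Odd (m.factorization p)} ⊆
      (range k).biUnion (fun j => {m ∈ Ioc a b | p ^ (2 * j + 1) ∣ m} \
        {m ∈ Ioc a b | p ^ (2 * j + 2) ∣ m}) ∪ {m ∈ Ioc a b | p ^ (2 * k + 1) ∣ m} := by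
  intro m hm
  obtain ⟨hmI, j, hj⟩ := mem_filter.mp hm
  have hm0 : m ≠ 0 := by grind
  have hdvd : ∀ s, p ^ s ∣ m ↔ s ≤ m.factorization p := fun s =>
    hp.pow_dvd_iff_le_factorization hm0
  simp only [mem_union, mem_biUnion, mem_range, Finset.mem_sdiff, mem_filter, hdvd]
  by_cases hjk : j < k
  · exact Or.inl ⟨j, hjk, ⟨hmI, by omega⟩, fun h => by omega⟩
  · exact Or.inr ⟨hmI, by omega⟩

lemma card_filter_odd_factorization_Ioc_le {a b : ℕ} (hab : a ≤ b) (k : ℕ) :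
    (#{m ∈ Ioc a b | Odd (m.factorization p)} : ℝ)
      ≤ ((b : ℝ) - a) / (p + 1) + ((b : ℝ) - a) / p ^ (2 * k + 1) + (2 * k + 1) := by
  set y : ℝ := (b : ℝ) - a
  set D : ℕ → Finset ℕ := fun s => {m ∈ Ioc a b | p ^ s ∣ m}
  have hD : ∀ s, |(#(D s) : ℝ) - y / p ^ s| ≤ 1 := fun s => by
    simpa using Nat.abs_card_filter_dvd_Ioc_sub_le (pow_pos hp.pos s) hab
  have hD_anti : ∀ j, D (2 * j + 2) ⊆ D (2 * j + 1) := fun j =>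
    monotone_filter_right _ fun _ _ h => (pow_dvd_pow p (by omega)).trans h
  have hcover : #{m ∈ Ioc a b | Odd (m.factorization p)}
      ≤ ∑ j ∈ range k, #(D (2 * j + 1) \ D (2 * j + 2)) + #(D (2 * k + 1)) :=
    (card_le_card (filter_odd_factorization_Ioc_subset hp a b k)).trans
      ((card_union_le _ _).trans (Nat.add_le_add_right card_biUnion_le _))
  have hgeom := sum_range_inv_pow_odd_sub_inv_pow_even_le (r := p) (by exact_mod_cast hp.pos) k
  have hy : 0 ≤ y := by simp [y, hab]
  calc (#{m ∈ Ioc a b | Odd (m.factorization p)} : ℝ)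
      ≤ ∑ j ∈ range k, (#(D (2 * j + 1) \ D (2 * j + 2)) : ℝ) + #(D (2 * k + 1)) := by
        exact_mod_cast hcover
    _ = ∑ j ∈ range k, ((#(D (2 * j + 1)) : ℝ) - #(D (2 * j + 2))) + #(D (2 * k + 1)) := by
        congr 1
        refine sum_congr rfl fun j _ => ?_
        rw [card_sdiff_of_subset (hD_anti j), Nat.cast_sub (card_le_card (hD_anti j))]
    _ ≤ ∑ j ∈ range k, (y * (1 / (p : ℝ) ^ (2 * j + 1) - 1 / (p : ℝ) ^ (2 * j + 2)) + 2)
          + (y / p ^ (2 * k + 1) + 1) := by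
        gcongr with j
        · have := abs_le.mp (hD (2 * j + 1))
          have := abs_le.mp (hD (2 * j + 2))
          rw [mul_sub, mul_one_div, mul_one_div]
          linarith
        · linarith [(abs_le.mp (hD (2 * k + 1))).2]
    _ = y * ∑ j ∈ range k, (1 / (p : ℝ) ^ (2 * j + 1) - 1 / (p : ℝ) ^ (2 * j + 2))
          + y / p ^ (2 * k + 1) + (2 * k + 1) := by
        rw [sum_add_distrib, ← mul_sum]
        simp only [sum_const, card_range, nsmul_eq_mul]
        ring
    _ ≤ y / (p + 1) + y / p ^ (2 * k + 1) + (2 * k + 1) := by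
        gcongr
        rw [← mul_one_div]
        exact mul_le_mul_of_nonneg_left hgeom hy

end OddValuation

lemma OmegaP_singleton (p n : ℕ) : OmegaP {p} n = n.factorization p := by
  simp only [OmegaP, Set.mem_singleton_iff, Finsupp.sum_ite_self_eq']

lemma exists_odd_factorization_of_mem_NPH_singleton {p : ℕ} {H : Finset ℕ} {n : ℕ}
    (hn : n ∈ NPH {p} H) : ∃ h ∈ H, Odd ((n + h).factorization p) := by
  by_contra! hall
  have hone : LambdaPH {p} H n = 1 := prod_eq_one fun h hh => by
    rw [lambdaP, OmegaP_singleton, (Nat.not_odd_iff_even.mp (hall h hh)).neg_one_pow]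
  have hneg : LambdaPH {p} H n = -1 := hn
  norm_num [hone] at hneg

lemma countIn_NPH_singleton_le {p : ℕ} (hp : p.Prime) (H : Finset ℕ) (x k : ℕ) :
    (countIn (NPH {p} H) x : ℝ)
      ≤ #H * ((x : ℝ) / (p + 1) + (x : ℝ) / p ^ (2 * k + 1) + (2 * k + 1)) := by
  have hcover : countIn (NPH {p} H) x
      ≤ ∑ h ∈ H, #{n ∈ Icc 1 x | Odd ((n + h).factorization p)} := by
    refine (card_le_card fun n hn => ?_).trans card_biUnion_le
    obtain ⟨hnI, hnN⟩ := mem_filter.mp hn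
    obtain ⟨h, hh, hodd⟩ := exists_odd_factorization_of_mem_NPH_singleton hnN
    exact mem_biUnion.mpr ⟨h, hh, mem_filter.mpr ⟨hnI, hodd⟩⟩
  calc (countIn (NPH {p} H) x : ℝ)
      ≤ ∑ h ∈ H, (#{m ∈ Ioc h (x + h) | Odd (m.factorization p)} : ℝ) := by
        simp_rw [← card_filter_Icc_one_add]
        exact_mod_cast hcover
    _ ≤ ∑ _h ∈ H, ((x : ℝ) / (p + 1) + (x : ℝ) / p ^ (2 * k + 1) + (2 * k + 1)) :=
        sum_le_sum fun h _ => by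
          simpa using card_filter_odd_factorization_Ioc_le hp (Nat.le_add_left h x) k
    _ = _ := by rw [sum_const, nsmul_eq_mul]

lemma limsup_le_of_le_add_div {f : ℕ → ℝ} (hf : ∀ x, 0 ≤ f x) {L C : ℝ}
    (hle : ∀ᶠ x in atTop, f x ≤ L + C / x) : limsup f atTop ≤ L := by
  have hg : Tendsto (fun x : ℕ => L + C / x) atTop (𝓝 L) := by
    simpa using tendsto_const_nhds.add (tendsto_const_div_atTop_nhds_zero_nat C)
  calc limsup f atTop ≤ limsup (fun x : ℕ => L + C / x) atTop :=
        limsup_le_limsup hle (isCoboundedUnder_le_of_le _ hf) hg.isBoundedUnder_le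
    _ = L := hg.limsup_eq

/-- For a prime `p` and a finite set `H` with `d` elements, the upper
natural density of `N_{{p}}^H` is at most `d/(p+1)`. -/
theorem stmt_15 (p : ℕ) (hp : p.Prime) (H : Finset ℕ) :
    Filter.limsup (fun x : ℕ => (countIn (NPH {p} H) x : ℝ) / x) Filter.atTop
      ≤ (H.card : ℝ) / ((p : ℝ) + 1) := by
  have hbound : ∀ k : ℕ, limsup (fun x : ℕ => (countIn (NPH {p} H) x : ℝ) / x) atTop
      ≤ #H / (p + 1) + #H / (p : ℝ) ^ (2 * k + 1) := fun k =>
    limsup_le_of_le_add_div (fun x => by positivity) (C := #H * (2 * k + 1)) <|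
      (eventually_gt_atTop 0).mono fun x hx => by
        have hx' : (0 : ℝ) < x := by exact_mod_cast hx
        rw [div_le_iff₀ hx']
        exact (countIn_NPH_singleton_le hp H x k).trans_eq (by field_simp)
  have hpow : Tendsto (fun k : ℕ => (p : ℝ) ^ (2 * k + 1)) atTop atTop :=
    (tendsto_pow_atTop_atTop_of_one_lt (by exact_mod_cast hp.one_lt)).comp
      (tendsto_atTop_mono (fun k => Nat.le_succ_of_le (Nat.le_mul_of_pos_left k two_pos))
        tendsto_id)
  have htend : Tendsto (fun k : ℕ => (#H : ℝ) / (p + 1) + #H / (p : ℝ) ^ (2 * k + 1)) atTop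
      (𝓝 (#H / (p + 1))) := by
    simpa using tendsto_const_nhds.add (tendsto_const_nhds.div_atTop hpow)
  exact ge_of_tendsto' htend hbound
end
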